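/- Let q, λ ∈ ℂ with |q| < 1, λ ≠ 0, 1 + λ² ≠ 0, and λ²q^k ≠ 1 for all integers k ≥ 1. Define c_k = (−λ²q;q²)_k q^{2k} / ((q;q)_k (λ²q;q)_k) for k ≥ 0, and for each integer w ≥ −1 set S(w) = λ^w Σ_{k=0}^∞ c_k q^{kw} (this series converges absolutely). Then for every integer w ≥ 1: S(w) − ((1+λ²)/λ) S(w−1) + S(w−2) = q^{w+1} S(w) + q^w S(w−2). -/

import Mathlib

/-!
Write `S(w) = λ^w T(q^w)` with `T(x) = ∑ c_k x^k`. The recurrence becomes, at `x = q^(w-2)`, the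
`q`-difference equation `λ² T(q²x) - (1+λ²) T(qx) + T(x) = q²x (λ²q T(q²x) + T(x))`.
Since `λ²y² - (1+λ²)y + 1 = (1-y)(1-λ²y)`, its left side is `∑ u_k` with
`u_k = c_k x^k (1-q^k)(1-λ²q^k)`, and the recurrence
`(1-q^(k+1))(1-λ²q^(k+1)) c_(k+1) = q²(1+λ²q^(2k+1)) c_k` makes its right side `∑ u_(k+1)`;
the two agree because `u_0 = 0`. All series converge by the ratio test, `c_(k+1)/c_k → q²`.
-/

/-- The `q`-Pochhammer symbol `(a;q)_k = ∏_{j=0}^{k-1} (1 - a q^j)`. -/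
noncomputable def qPoch (a q : ℂ) (k : ℕ) : ℂ := ∏ j ∈ Finset.range k, (1 - a * q ^ j)

/-- `c_k = (-λ²q;q²)_k q^{2k} / ((q;q)_k (λ²q;q)_k)`. -/
noncomputable def cSec (q lam : ℂ) (k : ℕ) : ℂ :=
  qPoch (-(lam ^ 2 * q)) (q ^ 2) k * q ^ (2 * k) / (qPoch q q k * qPoch (lam ^ 2 * q) q k)

/-- `S(w) = λ^w Σ_{k=0}^∞ c_k q^{kw}`, for integer `w` (in particular `w ≥ -1`). -/
noncomputable def SSec (q lam : ℂ) (w : ℤ) : ℂ :=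
  lam ^ w * ∑' k : ℕ, cSec q lam k * q ^ ((k : ℤ) * w)

open Filter Topology

lemma qPoch_succ (a q : ℂ) (k : ℕ) : qPoch a q (k + 1) = qPoch a q k * (1 - a * q ^ k) :=
  Finset.prod_range_succ _ _

lemma qPoch_ne_zero {a q : ℂ} (h : ∀ j, a * q ^ j ≠ 1) (k : ℕ) : qPoch a q k ≠ 0 :=
  Finset.prod_ne_zero_iff.2 fun j _ => sub_ne_zero.2 (h j).symm

lemma pow_ne_one_of_norm_lt_one {𝕜 : Type*} [NormedDivisionRing 𝕜] {q : 𝕜} (hq : ‖q‖ < 1)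
    {k : ℕ} (hk : k ≠ 0) : q ^ k ≠ 1 := fun h =>
  (pow_lt_one₀ (norm_nonneg q) hq hk).ne (by rw [← norm_pow, h, norm_one])

lemma summable_norm_of_succ_eq_mul {R : Type*} [SeminormedRing R] {f ρ : ℕ → R} {l : R}
    (hl : ‖l‖ < 1) (hρ : Tendsto ρ atTop (𝓝 l)) (hf : ∀ k, f (k + 1) = f k * ρ k) :
    Summable fun k => ‖f k‖ := by
  obtain ⟨r, hlr, hr⟩ := exists_between hl
  refine summable_of_ratio_norm_eventually_le hr ?_
  filter_upwards [hρ.norm.eventually_lt_const hlr] with k hk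
  simp only [norm_norm, hf]
  calc ‖f k * ρ k‖ ≤ ‖f k‖ * ‖ρ k‖ := norm_mul_le _ _
    _ ≤ r * ‖f k‖ := by rw [mul_comm]; exact mul_le_mul_of_nonneg_right hk.le (norm_nonneg _)

section

variable {q lam : ℂ}

lemma cSec_succ_mul (hq : ‖q‖ < 1) (hk : ∀ k : ℕ, 1 ≤ k → lam ^ 2 * q ^ k ≠ 1) (k : ℕ) :
    cSec q lam (k + 1) * ((1 - q ^ (k + 1)) * (1 - lam ^ 2 * q ^ (k + 1))) =
      q ^ 2 * (1 + lam ^ 2 * q ^ (2 * k + 1)) * cSec q lam k := by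
  have hqq : ∀ j, q * q ^ j ≠ 1 := fun j => by
    rw [← pow_succ']; exact pow_ne_one_of_norm_lt_one hq j.succ_ne_zero
  have hlq : ∀ j, lam ^ 2 * q * q ^ j ≠ 1 := fun j => by
    rw [mul_assoc, ← pow_succ']; exact hk _ j.succ_pos
  have h1 := qPoch_ne_zero hqq k
  have h2 := qPoch_ne_zero hlq k
  have h3 := sub_ne_zero.2 (hqq k).symm
  have h4 := sub_ne_zero.2 (hlq k).symm
  simp only [cSec, qPoch_succ]
  field_simp
  ring

lemma cSec_succ (hq : ‖q‖ < 1) (hk : ∀ k : ℕ, 1 ≤ k → lam ^ 2 * q ^ k ≠ 1) (k : ℕ) :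
    cSec q lam (k + 1) = cSec q lam k * (q ^ 2 * (1 + lam ^ 2 * q ^ (2 * k + 1)) /
      ((1 - q ^ (k + 1)) * (1 - lam ^ 2 * q ^ (k + 1)))) := by
  have h1 := sub_ne_zero.2 (pow_ne_one_of_norm_lt_one hq k.succ_ne_zero).symm
  have h2 := sub_ne_zero.2 (hk _ k.succ_pos).symm
  rw [mul_div_assoc', eq_div_iff (mul_ne_zero h1 h2), cSec_succ_mul hq hk, mul_comm]

lemma tendsto_cSec_ratio (hq : ‖q‖ < 1) :
    Tendsto (fun k : ℕ => q ^ 2 * (1 + lam ^ 2 * q ^ (2 * k + 1)) /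
      ((1 - q ^ (k + 1)) * (1 - lam ^ 2 * q ^ (k + 1)))) atTop (𝓝 (q ^ 2)) := by
  have h : Tendsto (fun k : ℕ => q ^ k) atTop (𝓝 0) :=
    tendsto_pow_atTop_nhds_zero_of_norm_lt_one hq
  have h1 : Tendsto (fun k : ℕ => q ^ (k + 1)) atTop (𝓝 0) := by
    simpa [pow_succ] using h.mul_const q
  have h2 : Tendsto (fun k : ℕ => q ^ (2 * k + 1)) atTop (𝓝 0) := by
    simpa [pow_succ, pow_mul'] using (h.mul h).mul_const q
  simpa [Pi.div_def] using ((h2.const_mul (lam ^ 2)).const_add 1 |>.const_mul (q ^ 2)).div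
    ((h1.const_sub 1).mul ((h1.const_mul (lam ^ 2)).const_sub 1)) (by simp)

lemma summable_norm_cSec_mul_pow (hq : ‖q‖ < 1) (hk : ∀ k : ℕ, 1 ≤ k → lam ^ 2 * q ^ k ≠ 1)
    {x : ℂ} (hx : ‖q ^ 2 * x‖ < 1) : Summable fun k => ‖cSec q lam k * x ^ k‖ :=
  summable_norm_of_succ_eq_mul hx ((tendsto_cSec_ratio (lam := lam) hq).mul_const x) fun k => by
    rw [cSec_succ hq hk, pow_succ]; ring

noncomputable def cSecSeries (q lam x : ℂ) : ℂ := ∑' k : ℕ, cSec q lam k * x ^ k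

lemma cSec_mul_zpow (w : ℤ) (k : ℕ) :
    cSec q lam k * q ^ ((k : ℤ) * w) = cSec q lam k * (q ^ w) ^ k := by
  rw [mul_comm (k : ℤ), zpow_mul, zpow_natCast]

lemma SSec_eq_cSecSeries (w : ℤ) : SSec q lam w = lam ^ w * cSecSeries q lam (q ^ w) := by
  simp only [SSec, cSecSeries, cSec_mul_zpow]

lemma norm_sq_mul_mul_lt_one (hq : ‖q‖ < 1) {x : ℂ} (hx : ‖q ^ 2 * x‖ < 1) :
    ‖q ^ 2 * (q * x)‖ < 1 := by
  rw [mul_left_comm, norm_mul]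
  exact mul_lt_one_of_nonneg_of_lt_one_left (norm_nonneg q) hq hx.le

lemma cSecSeries_qDifference (hq : ‖q‖ < 1) (hk : ∀ k : ℕ, 1 ≤ k → lam ^ 2 * q ^ k ≠ 1)
    {x : ℂ} (hx : ‖q ^ 2 * x‖ < 1) :
    lam ^ 2 * cSecSeries q lam (q ^ 2 * x) - (1 + lam ^ 2) * cSecSeries q lam (q * x) +
        cSecSeries q lam x =
      q ^ 2 * x * (lam ^ 2 * q * cSecSeries q lam (q ^ 2 * x) + cSecSeries q lam x) := by
  have hasSum {y : ℂ} (hy : ‖q ^ 2 * y‖ < 1) :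
      HasSum (fun k => cSec q lam k * y ^ k) (cSecSeries q lam y) :=
    (summable_norm_cSec_mul_pow hq hk hy).of_norm.hasSum
  have hqx := norm_sq_mul_mul_lt_one hq hx
  have hq2x : ‖q ^ 2 * (q ^ 2 * x)‖ < 1 := by
    simpa [pow_two, mul_assoc] using norm_sq_mul_mul_lt_one hq hqx
  set u : ℕ → ℂ := fun k => cSec q lam k * x ^ k * ((1 - q ^ k) * (1 - lam ^ 2 * q ^ k))
  have hu : HasSum u (lam ^ 2 * cSecSeries q lam (q ^ 2 * x) -
      (1 + lam ^ 2) * cSecSeries q lam (q * x) + cSecSeries q lam x) := by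
    refine ((((hasSum hq2x).mul_left (lam ^ 2)).sub
      ((hasSum hqx).mul_left (1 + lam ^ 2))).add (hasSum hx)).congr_fun fun k => ?_
    simp only [u]
    ring
  have hu_succ : HasSum (fun k => u (k + 1))
      (q ^ 2 * x * (lam ^ 2 * q * cSecSeries q lam (q ^ 2 * x) + cSecSeries q lam x)) := by
    refine ((((hasSum hq2x).mul_left (lam ^ 2 * q)).add (hasSum hx)).mul_left
      (q ^ 2 * x)).congr_fun fun k => ?_
    simp only [u]
    linear_combination x ^ (k + 1) * cSec_succ_mul hq hk k
  simpa [u] using hu.unique hu_succ.zero_add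

lemma cSecSeries_zero_left (lam x : ℂ) : cSecSeries 0 lam x = 1 := by
  rw [cSecSeries, tsum_eq_single 0 fun k hk => by simp [cSec, hk]]
  simp [cSec, qPoch]

lemma norm_sq_mul_zpow_lt_one (hq : ‖q‖ < 1) {w : ℤ} (hw : -1 ≤ w) : ‖q ^ 2 * q ^ w‖ < 1 := by
  rcases eq_or_ne q 0 with rfl | hq0
  · simp
  rw [← zpow_natCast, ← zpow_add₀ hq0, norm_zpow]
  exact zpow_lt_one₀ (norm_pos_iff.2 hq0) hq (by omega)

lemma SSec_recurrence_of_cSecSeries (hlam : lam ≠ 0) (w : ℤ)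
    (h : lam ^ 2 * cSecSeries q lam (q ^ w) - (1 + lam ^ 2) * cSecSeries q lam (q ^ (w - 1)) +
        cSecSeries q lam (q ^ (w - 2)) =
      q ^ (w + 1) * lam ^ 2 * cSecSeries q lam (q ^ w) + q ^ w * cSecSeries q lam (q ^ (w - 2))) :
    SSec q lam w - ((1 + lam ^ 2) / lam) * SSec q lam (w - 1) + SSec q lam (w - 2) =
      q ^ (w + 1) * SSec q lam w + q ^ w * SSec q lam (w - 2) := by
  have h2 : lam ^ w = lam ^ (w - 2) * lam ^ 2 := by
    rw [← zpow_natCast, ← zpow_add₀ hlam]; congr 1; push_cast; ring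
  have h1 : lam ^ (w - 1) = lam ^ (w - 2) * lam := by
    rw [← zpow_add_one₀ hlam]; congr 1; ring
  simp only [SSec_eq_cSecSeries, h1, h2]
  have hdiv : (1 + lam ^ 2) / lam * lam = 1 + lam ^ 2 := div_mul_cancel₀ _ hlam
  linear_combination lam ^ (w - 2) * h - lam ^ (w - 2) * cSecSeries q lam (q ^ (w - 1)) * hdiv

end

theorem ansatz_qSecant_general (q lam : ℂ) (hq : ‖q‖ < 1) (hlam : lam ≠ 0)
    (hk : ∀ k : ℕ, 1 ≤ k → lam ^ 2 * q ^ k ≠ 1) :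
    (∀ w : ℤ, -1 ≤ w → Summable fun k : ℕ => ‖cSec q lam k * q ^ ((k : ℤ) * w)‖) ∧
    ∀ w : ℤ, 1 ≤ w →
      SSec q lam w - ((1 + lam ^ 2) / lam) * SSec q lam (w - 1) + SSec q lam (w - 2)
        = q ^ (w + 1) * SSec q lam w + q ^ w * SSec q lam (w - 2) := by
  refine ⟨fun w hw => ?_, fun w hw => SSec_recurrence_of_cSecSeries hlam w ?_⟩
  · simp only [cSec_mul_zpow]
    exact summable_norm_cSec_mul_pow hq hk (norm_sq_mul_zpow_lt_one hq hw)
  -- For `q = 0` the identity `q * q ^ (w - 2) = q ^ (w - 1)` fails at `w = 1`; instead `T ≡ 1`.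
  rcases eq_or_ne q 0 with rfl | hq0
  · simp only [cSecSeries_zero_left, zero_zpow _ (by omega : w + 1 ≠ 0),
      zero_zpow _ (by omega : w ≠ 0)]
    ring
  have hx := norm_sq_mul_zpow_lt_one hq (w := w - 2) (by omega)
  have h2 : q ^ 2 * q ^ (w - 2) = q ^ w := by
    rw [← zpow_natCast, ← zpow_add₀ hq0]; congr 1; push_cast; ring
  have h1 : q * q ^ (w - 2) = q ^ (w - 1) := by
    rw [← zpow_one_add₀ hq0]; congr 1; ring
  have hw1 : q ^ (w + 1) = q ^ w * q := zpow_add_one₀ hq0 w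
  have h := cSecSeries_qDifference (lam := lam) hq hk hx
  rw [h2, h1] at h
  rw [hw1]
  linear_combination h

theorem ansatz_qSecant (q lam : ℂ) (hq : ‖q‖ < 1) (hlam : lam ≠ 0)
    (hlam2 : 1 + lam ^ 2 ≠ 0)
    (hk : ∀ k : ℕ, 1 ≤ k → lam ^ 2 * q ^ k ≠ 1) :
    (∀ w : ℤ, -1 ≤ w → Summable fun k : ℕ => ‖cSec q lam k * q ^ ((k : ℤ) * w)‖) ∧
    ∀ w : ℤ, 1 ≤ w →
      SSec q lam w - ((1 + lam ^ 2) / lam) * SSec q lam (w - 1) + SSec q lam (w - 2)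
        = q ^ (w + 1) * SSec q lam w + q ^ w * SSec q lam (w - 2) :=
  ansatz_qSecant_general q lam hq hlam hk
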